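/- Let $0 < \gamma < 2 \wedge d$ and $\gamma_2 \geq 0$ with $\gamma - \gamma_2 < d$. With $\Gamma(r,x) = (2\pi r)^{-d/2} e^{-|x|^2/(2r)}$ the heat kernel, there exists a constant $C > 0$ such that for all $r > 0$, $\int_{\mathbb{R}^d}\int_{\mathbb{R}^d} |x|^{\gamma_2}\, \Gamma(r, x)\, \Gamma(r, y)\, |x - y|^{-\gamma}\, dx\, dy \leq C\, r^{(\gamma_2 - \gamma)/2}$. -/

import Mathlib

open MeasureTheory

noncomputable def heatKernel (d : ℕ) (t : ℝ) (x : EuclideanSpace ℝ (Fin d)) : ℝ :=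
  (2 * Real.pi * t) ^ (-(d : ℝ) / 2) * Real.exp (-‖x‖ ^ 2 / (2 * t))

open Real Metric Set


variable {d : ℕ}

local notation "E" => EuclideanSpace ℝ (Fin d)

lemma integrable_gauss {b : ℝ} (hb : 0 < b) :
    Integrable (fun v : E => Real.exp (-b * ‖v‖ ^ 2)) := by
  have h := GaussianFourier.integrable_cexp_neg_mul_sq_norm_add
    (V := E) (b := (b : ℂ)) (by simpa using hb) 0 0
  have := h.norm
  refine this.congr (Filter.Eventually.of_forall fun v => ?_)
  simp [Complex.norm_exp]
  left; norm_cast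

lemma integral_gauss {b : ℝ} (hb : 0 < b) :
    ∫ v : E, Real.exp (-b * ‖v‖ ^ 2) = (Real.pi / b) ^ ((d : ℝ) / 2) := by
  rw [GaussianFourier.integral_rexp_neg_mul_sq_norm hb]
  simp

lemma heatKernel_nonneg {r : ℝ} (hr : 0 < r) (x : E) : 0 ≤ heatKernel d r x := by
  unfold heatKernel; positivity

lemma heatKernel_eq (r : ℝ) :
    heatKernel d r = fun x : E =>
      (2 * Real.pi * r) ^ (-(d : ℝ) / 2) * Real.exp (-(1/(2*r)) * ‖x‖ ^ 2) := by
  funext x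
  unfold heatKernel
  congr 1
  congr 1
  ring

lemma heatKernel_integrable {r : ℝ} (hr : 0 < r) :
    Integrable (heatKernel d r) := by
  rw [heatKernel_eq]
  exact (integrable_gauss (by positivity)).const_mul _

lemma heatKernel_mass {r : ℝ} (hr : 0 < r) :
    ∫ y : E, heatKernel d r y = 1 := by
  rw [heatKernel_eq]
  rw [integral_const_mul, integral_gauss (by positivity)]
  have h2 : Real.pi / (1/(2*r)) = 2 * Real.pi * r := by
    field_simp
  rw [h2, ← Real.rpow_add (by positivity), neg_div, neg_add_cancel, Real.rpow_zero]

lemma heatKernel_lintegral {r : ℝ} (hr : 0 < r) :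
    ∫⁻ y : E, ENNReal.ofReal (heatKernel d r y) = 1 := by
  rw [← ofReal_integral_eq_lintegral_ofReal (heatKernel_integrable hr)
    (Filter.Eventually.of_forall fun y => heatKernel_nonneg hr y), heatKernel_mass hr]
  simp

lemma heatKernel_measurable (r : ℝ) : Measurable (heatKernel d r) := by
  unfold heatKernel; fun_prop


lemma ball_bound (d : ℕ) (hd : 1 ≤ d) {γ : ℝ} (hγ : 0 < γ) (hγd : γ < d) :
    ∃ c : ℝ, 0 ≤ c ∧ ∀ R : ℝ, 0 < R →
      (∫⁻ y in closedBall (0 : EuclideanSpace ℝ (Fin d)) R,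
        ENNReal.ofReal (‖y‖ ^ (-γ))) ≤ ENNReal.ofReal (c * R ^ ((d : ℝ) - γ)) := by
  classical
  set V := EuclideanSpace ℝ (Fin d)
  have hdim : Module.finrank ℝ V = d := by simp [V]
  set vB : ENNReal := volume (ball (0 : V) 1) with hvB
  have hvBfin : vB ≠ ⊤ := measure_ball_lt_top.ne
  set mB : ℝ := vB.toReal with hmB
  have hmB0 : 0 ≤ mB := ENNReal.toReal_nonneg
  have hdγ : 0 < (d : ℝ) - γ := by linarith
  have hfac : 0 ≤ 1 + γ / ((d : ℝ) - γ) := by positivity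
  refine ⟨mB * (1 + γ / ((d : ℝ) - γ)), mul_nonneg hmB0 hfac, fun R hR => ?_⟩
  set μ : Measure V := volume.restrict (closedBall (0 : V) R) with hμ
  have hnn : 0 ≤ᵐ[μ] fun y : V => ‖y‖ ^ (-γ) :=
    Filter.Eventually.of_forall fun y => Real.rpow_nonneg (norm_nonneg _) _
  have hmeas : AEMeasurable (fun y : V => ‖y‖ ^ (-γ)) μ := by
    apply Measurable.aemeasurable; fun_prop
  rw [show (∫⁻ y in closedBall (0 : V) R, ENNReal.ofReal (‖y‖ ^ (-γ)))
      = ∫⁻ y, ENNReal.ofReal (‖y‖ ^ (-γ)) ∂μ from rfl,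
    lintegral_eq_lintegral_meas_le μ hnn hmeas]
  set a : ℝ := R ^ (-γ) with ha
  have ha0 : 0 < a := Real.rpow_pos_of_pos hR _
  have hsplit : Ioi (0:ℝ) ⊆ Ioc 0 a ∪ Ioi a := by
    intro t ht
    rcases le_or_gt t a with h | h
    · exact Or.inl ⟨ht, h⟩
    · exact Or.inr h
  calc (∫⁻ t in Ioi (0:ℝ), μ {y : V | t ≤ ‖y‖ ^ (-γ)})
      ≤ ∫⁻ t in Ioc 0 a ∪ Ioi a, μ {y : V | t ≤ ‖y‖ ^ (-γ)} :=
        lintegral_mono_set hsplit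
    _ ≤ (∫⁻ t in Ioc 0 a, μ {y : V | t ≤ ‖y‖ ^ (-γ)})
        + ∫⁻ t in Ioi a, μ {y : V | t ≤ ‖y‖ ^ (-γ)} := lintegral_union_le _ _ _
    _ ≤ ENNReal.ofReal (mB * R ^ ((d:ℝ) - γ))
        + ENNReal.ofReal (mB * (R ^ ((d:ℝ) - γ) * (γ / ((d : ℝ) - γ)))) := by
        gcongr ?_ + ?_
        · -- near part
          have hvB' : vB = ENNReal.ofReal mB := (ENNReal.ofReal_toReal hvBfin).symm
          calc (∫⁻ t in Ioc 0 a, μ {y : V | t ≤ ‖y‖ ^ (-γ)})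
              ≤ ∫⁻ _ in Ioc (0:ℝ) a, (ENNReal.ofReal (R ^ d) * vB) := by
                apply setLIntegral_mono' measurableSet_Ioc
                intro t _
                calc μ {y : V | t ≤ ‖y‖ ^ (-γ)} ≤ μ univ := measure_mono (subset_univ _)
                  _ = volume (closedBall (0 : V) R) := by
                      rw [hμ, Measure.restrict_apply_univ]
                  _ = ENNReal.ofReal (R ^ d) * vB := by
                      rw [Measure.addHaar_closedBall _ _ hR.le, hdim]
            _ = (ENNReal.ofReal (R ^ d) * vB) * volume (Ioc (0:ℝ) a) :=
                setLIntegral_const _ _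
            _ = ENNReal.ofReal (R ^ d) * ENNReal.ofReal mB * ENNReal.ofReal a := by
                rw [hvB', Real.volume_Ioc, sub_zero]
            _ = ENNReal.ofReal (R ^ d * mB * a) := by
                rw [← ENNReal.ofReal_mul (by positivity), ← ENNReal.ofReal_mul (by positivity)]
            _ = ENNReal.ofReal (mB * R ^ ((d:ℝ) - γ)) := by
                congr 1
                rw [ha, ← Real.rpow_natCast R d,
                  show (d:ℝ) - γ = (d:ℝ) + (-γ) by ring, Real.rpow_add hR]
                ring
        · -- far part
          have hvB' : vB = ENNReal.ofReal mB := (ENNReal.ofReal_toReal hvBfin).symm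
          set e : ℝ := -((d:ℝ)/γ) with he_def
          have hdγ1 : 1 < (d:ℝ)/γ := (one_lt_div hγ).2 hγd
          have he : e < -1 := by rw [he_def]; linarith
          have hγ' : γ ≠ 0 := hγ.ne'
          have hsub' : ((d:ℝ) - γ) ≠ 0 := hdγ.ne'
          have hstep : ∀ t ∈ Ioi a, μ {y : V | t ≤ ‖y‖ ^ (-γ)}
              ≤ ENNReal.ofReal (t ^ e) * vB := by
            intro t ht
            have ht0 : 0 < t := lt_trans ha0 ht
            have hsubset : {y : V | t ≤ ‖y‖ ^ (-γ)} ⊆ closedBall (0:V) (t ^ (-γ⁻¹)) := by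
              intro y hy
              simp only [mem_setOf_eq] at hy
              have hy0 : ‖y‖ ≠ 0 := by
                intro h0
                rw [h0, Real.zero_rpow (neg_ne_zero.2 hγ')] at hy
                linarith
              have hn0 : 0 < ‖y‖ := lt_of_le_of_ne (norm_nonneg y) (Ne.symm hy0)
              have h1 : (‖y‖ ^ (-γ)) ^ (-γ⁻¹) ≤ t ^ (-γ⁻¹) :=
                Real.rpow_le_rpow_of_nonpos ht0 hy (by simp [inv_nonneg, hγ.le])
              have h2 : (‖y‖ ^ (-γ)) ^ (-γ⁻¹) = ‖y‖ := by
                rw [← Real.rpow_mul (norm_nonneg y)]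
                rw [show (-γ) * (-γ⁻¹) = γ * γ⁻¹ by ring, mul_inv_cancel₀ hγ',
                  Real.rpow_one]
              rw [mem_closedBall_zero_iff]
              rw [h2] at h1
              exact h1
            calc μ {y : V | t ≤ ‖y‖ ^ (-γ)}
                ≤ μ (closedBall (0:V) (t ^ (-γ⁻¹))) := measure_mono hsubset
              _ ≤ volume (closedBall (0:V) (t ^ (-γ⁻¹))) := by
                  rw [hμ]; exact Measure.restrict_le_self _
              _ = ENNReal.ofReal ((t ^ (-γ⁻¹)) ^ d) * vB := by
                  rw [Measure.addHaar_closedBall _ _ (Real.rpow_nonneg ht0.le _), hdim]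
              _ = ENNReal.ofReal (t ^ e) * vB := by
                  congr 2
                  rw [← Real.rpow_natCast (t ^ (-γ⁻¹)) d, ← Real.rpow_mul ht0.le]
                  congr 1
                  rw [he_def]
                  ring
          have hint : IntegrableOn (fun t : ℝ => t ^ e) (Ioi a) :=
            integrableOn_Ioi_rpow_of_lt he ha0
          have hnn' : 0 ≤ᵐ[volume.restrict (Ioi a)] fun t : ℝ => t ^ e :=
            (ae_restrict_iff' measurableSet_Ioi).2 (Filter.Eventually.of_forall
              fun t ht => Real.rpow_nonneg (le_of_lt (lt_trans ha0 ht)) _)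
          have hval : ∫ t in Ioi a, t ^ e = R ^ ((d:ℝ) - γ) * (γ / ((d:ℝ) - γ)) := by
            rw [integral_Ioi_rpow_of_lt he ha0, ha, ← Real.rpow_mul hR.le]
            have h1 : (-γ) * (e + 1) = (d:ℝ) - γ := by rw [he_def]; field_simp; ring
            rw [h1]
            have hne : e + 1 ≠ 0 := by intro h; rw [he_def] at h; linarith
            have hne2 : (-(d:ℝ) + γ) ≠ 0 := by intro h; apply hsub'; linarith
            field_simp [he_def, hne2]
            rw [he_def, mul_add, mul_neg, mul_div_cancel₀ _ hγ']; ring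
          calc (∫⁻ t in Ioi a, μ {y : V | t ≤ ‖y‖ ^ (-γ)})
              ≤ ∫⁻ t in Ioi a, ENNReal.ofReal (t ^ e) * vB :=
                setLIntegral_mono' measurableSet_Ioi hstep
            _ = (∫⁻ t in Ioi a, ENNReal.ofReal (t ^ e)) * vB :=
                lintegral_mul_const' _ _ hvBfin
            _ = ENNReal.ofReal (∫ t in Ioi a, t ^ e) * vB := by
                rw [← ofReal_integral_eq_lintegral_ofReal hint hnn']
            _ = ENNReal.ofReal (mB * (R ^ ((d:ℝ) - γ) * (γ / ((d:ℝ) - γ)))) := by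
                rw [hval, hvB', ← ENNReal.ofReal_mul (by positivity), mul_comm]
    _ ≤ ENNReal.ofReal (mB * (1 + γ / ((d : ℝ) - γ)) * R ^ ((d : ℝ) - γ)) := by
        have h1 : (0:ℝ) ≤ mB * R ^ ((d:ℝ) - γ) := by positivity
        have h2 : (0:ℝ) ≤ mB * (R ^ ((d:ℝ) - γ) * (γ / ((d : ℝ) - γ))) := by positivity
        rw [← ENNReal.ofReal_add h1 h2]
        apply ENNReal.ofReal_le_ofReal
        ring_nf
        apply le_of_eq
        ring

lemma inner_bound (hd : 1 ≤ d) {γ : ℝ} (hγ : 0 < γ) (hγd : γ < d) :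
    ∃ K : ℝ, 0 < K ∧ ∀ r : ℝ, 0 < r → ∀ x : E,
      ∫ y : E, heatKernel d r y * ‖x - y‖ ^ (-γ) ≤ K * r ^ (-γ/2) := by
  obtain ⟨c, hc, hball⟩ := ball_bound d hd hγ hγd
  have hbase : (0:ℝ) < 2 * Real.pi := by positivity
  refine ⟨c * (2*Real.pi) ^ (-(d:ℝ)/2) + 1, by positivity, fun r hr x => ?_⟩
  set K : ℝ := c * (2*Real.pi) ^ (-(d:ℝ)/2) + 1 with hK_def
  set R : ℝ := r ^ ((1:ℝ)/2) with hR_def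
  have hR : 0 < R := Real.rpow_pos_of_pos hr _
  set c0 : ℝ := (2*Real.pi*r) ^ (-(d:ℝ)/2) with hc0_def
  have hc0 : 0 < c0 := Real.rpow_pos_of_pos (by positivity) _
  have hfm : AEStronglyMeasurable (fun y : E => heatKernel d r y * ‖x - y‖ ^ (-γ)) volume := by
    apply Measurable.aestronglyMeasurable
    apply (heatKernel_measurable r).mul
    fun_prop
  have hfnn : 0 ≤ᵐ[(volume : Measure E)] fun y : E => heatKernel d r y * ‖x - y‖ ^ (-γ) :=
    Filter.Eventually.of_forall fun y =>
      mul_nonneg (heatKernel_nonneg hr y) (Real.rpow_nonneg (norm_nonneg _) _)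
  rw [integral_eq_lintegral_of_nonneg_ae hfnn hfm]
  have hKr : (0:ℝ) ≤ K * r ^ (-γ/2) := by positivity
  apply ENNReal.toReal_le_of_le_ofReal hKr
  set h1 : E → ENNReal :=
    (closedBall x R).indicator (fun y => ENNReal.ofReal (c0 * ‖x - y‖ ^ (-γ))) with hh1
  have hptwise : ∀ y : E, ENNReal.ofReal (heatKernel d r y * ‖x - y‖ ^ (-γ)) ≤
      h1 y + ENNReal.ofReal (R ^ (-γ) * heatKernel d r y) := by
    intro y
    by_cases hy : y ∈ closedBall x R
    · rw [hh1, indicator_of_mem hy]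
      refine le_add_right (ENNReal.ofReal_le_ofReal ?_)
      refine mul_le_mul_of_nonneg_right ?_ (Real.rpow_nonneg (norm_nonneg _) _)
      unfold heatKernel
      rw [hc0_def]
      nth_rewrite 2 [← mul_one ((2*Real.pi*r) ^ (-(d:ℝ)/2))]
      refine mul_le_mul_of_nonneg_left ?_ hc0.le
      rw [Real.exp_le_one_iff]
      apply div_nonpos_of_nonpos_of_nonneg
      · simpa using sq_nonneg ‖y‖
      · positivity
    · have hy' : R < ‖x - y‖ := by
        rw [mem_closedBall, not_le, dist_eq_norm, ← norm_sub_rev] at hy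
        exact hy
      rw [hh1, indicator_of_notMem hy, zero_add]
      apply ENNReal.ofReal_le_ofReal
      rw [mul_comm (R ^ (-γ))]
      exact mul_le_mul_of_nonneg_left
        (Real.rpow_le_rpow_of_nonpos hR hy'.le (neg_nonpos.2 hγ.le))
        (heatKernel_nonneg hr y)
  have hmeas1 : Measurable h1 := by
    apply Measurable.indicator _ measurableSet_closedBall
    fun_prop
  have htrans : (∫⁻ y in closedBall x R, ENNReal.ofReal (‖x - y‖ ^ (-γ)))
      = ∫⁻ z in closedBall (0:E) R, ENNReal.ofReal (‖z‖ ^ (-γ)) := by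
    have hmp : MeasurePreserving (fun y : E => x - y) volume volume :=
      Measure.measurePreserving_sub_left volume x
    have hpre : (fun y : E => x - y) ⁻¹' (closedBall (0:E) R) = closedBall x R := by
      ext y
      simp [mem_closedBall_zero_iff, mem_closedBall, dist_eq_norm, norm_sub_rev]
    rw [← hpre]
    exact hmp.setLIntegral_comp_preimage measurableSet_closedBall
      (f := fun z : E => ENNReal.ofReal (‖z‖ ^ (-γ))) (by fun_prop)
  have hpart1 : ∫⁻ y, h1 y ≤ ENNReal.ofReal (c0 * (c * R ^ ((d:ℝ) - γ))) := by
    rw [hh1, lintegral_indicator measurableSet_closedBall]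
    calc (∫⁻ y in closedBall x R, ENNReal.ofReal (c0 * ‖x - y‖ ^ (-γ)))
        = ∫⁻ y in closedBall x R, ENNReal.ofReal c0 * ENNReal.ofReal (‖x - y‖ ^ (-γ)) := by
          simp_rw [ENNReal.ofReal_mul hc0.le]
      _ = ENNReal.ofReal c0 * ∫⁻ y in closedBall x R, ENNReal.ofReal (‖x - y‖ ^ (-γ)) :=
          lintegral_const_mul' _ _ ENNReal.ofReal_ne_top
      _ ≤ ENNReal.ofReal c0 * ENNReal.ofReal (c * R ^ ((d:ℝ) - γ)) := by
          rw [htrans]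
          exact mul_le_mul_right (hball R hR) _
      _ = ENNReal.ofReal (c0 * (c * R ^ ((d:ℝ) - γ))) := by
          rw [← ENNReal.ofReal_mul hc0.le]
  have hpart2 : (∫⁻ y : E, ENNReal.ofReal (R ^ (-γ) * heatKernel d r y))
      = ENNReal.ofReal (R ^ (-γ)) := by
    simp_rw [ENNReal.ofReal_mul (Real.rpow_nonneg hR.le _)]
    rw [lintegral_const_mul' _ _ ENNReal.ofReal_ne_top, heatKernel_lintegral hr, mul_one]
  have key : c0 * (c * R ^ ((d:ℝ) - γ)) + R ^ (-γ) = K * r ^ (-γ/2) := by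
    have e1 : R ^ ((d:ℝ) - γ) = r ^ (((d:ℝ) - γ)/2) := by
      rw [hR_def, ← Real.rpow_mul hr.le]
      congr 1; ring
    have e2 : R ^ (-γ) = r ^ (-γ/2) := by
      rw [hR_def, ← Real.rpow_mul hr.le]
      congr 1; ring
    have e3 : c0 = (2*Real.pi) ^ (-(d:ℝ)/2) * r ^ (-(d:ℝ)/2) := by
      rw [hc0_def, Real.mul_rpow hbase.le hr.le]
    have e4 : r ^ (-(d:ℝ)/2) * r ^ (((d:ℝ) - γ)/2) = r ^ (-γ/2) := by
      rw [← Real.rpow_add hr]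
      congr 1; ring
    calc c0 * (c * R ^ ((d:ℝ) - γ)) + R ^ (-γ)
        = (2*Real.pi) ^ (-(d:ℝ)/2) * c * (r ^ (-(d:ℝ)/2) * r ^ (((d:ℝ) - γ)/2))
          + r ^ (-γ/2) := by rw [e1, e2, e3]; ring
      _ = (2*Real.pi) ^ (-(d:ℝ)/2) * c * r ^ (-γ/2) + r ^ (-γ/2) := by rw [e4]
      _ = K * r ^ (-γ/2) := by rw [hK_def]; ring
  calc (∫⁻ y : E, ENNReal.ofReal (heatKernel d r y * ‖x - y‖ ^ (-γ)))
      ≤ ∫⁻ y : E, (h1 y + ENNReal.ofReal (R ^ (-γ) * heatKernel d r y)) :=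
        lintegral_mono hptwise
    _ = (∫⁻ y, h1 y) + ∫⁻ y : E, ENNReal.ofReal (R ^ (-γ) * heatKernel d r y) :=
        lintegral_add_left hmeas1 _
    _ ≤ ENNReal.ofReal (c0 * (c * R ^ ((d:ℝ) - γ))) + ENNReal.ofReal (R ^ (-γ)) := by
        rw [hpart2]
        exact add_le_add_left hpart1 _
    _ = ENNReal.ofReal (c0 * (c * R ^ ((d:ℝ) - γ)) + R ^ (-γ)) := by
        rw [← ENNReal.ofReal_add (by positivity) (Real.rpow_nonneg hR.le _)]
    _ = ENNReal.ofReal (K * r ^ (-γ/2)) := by rw [key]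


lemma exists_M {γ₂ : ℝ} (hγ₂ : 0 ≤ γ₂) :
    ∃ M : ℝ, 1 ≤ M ∧ ∀ s : ℝ, 0 ≤ s → s ^ γ₂ ≤ M * Real.exp (s ^ 2 / 4) := by
  set n : ℕ := ⌈γ₂⌉₊
  set M : ℝ := max 1 (4 ^ n * n.factorial) with hM
  have hM0 : (1 : ℝ) ≤ M := le_max_left _ _
  refine ⟨M, hM0, fun s hs => ?_⟩
  have he : (1 : ℝ) ≤ Real.exp (s ^ 2 / 4) := by
    rw [Real.one_le_exp_iff]; positivity
  rcases le_or_gt s 1 with h1 | h1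
  · calc s ^ γ₂ ≤ 1 := Real.rpow_le_one hs h1 hγ₂
    _ ≤ M := hM0
    _ = M * 1 := (mul_one _).symm
    _ ≤ M * Real.exp (s ^ 2 / 4) :=
        mul_le_mul_of_nonneg_left he (le_trans zero_le_one hM0)
  · have hs1 : (1 : ℝ) ≤ s := h1.le
    have key : (s ^ 2 / 4) ^ n / n.factorial ≤ Real.exp (s ^ 2 / 4) := by
      calc (s ^ 2 / 4) ^ n / n.factorial
          ≤ ∑ i ∈ Finset.range (n + 1), (s ^ 2 / 4) ^ i / i.factorial :=
            Finset.single_le_sum (f := fun i => (s ^ 2 / 4) ^ i / (i.factorial : ℝ))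
              (fun i _ => by positivity) (Finset.self_mem_range_succ n)
        _ ≤ Real.exp (s ^ 2 / 4) := Real.sum_le_exp_of_nonneg (by positivity) _
    calc s ^ γ₂ ≤ s ^ ((2 * n : ℕ) : ℝ) := by
          apply Real.rpow_le_rpow_of_exponent_le hs1
          push_cast
          nlinarith [Nat.le_ceil γ₂]
    _ = (s ^ 2) ^ n := by rw [Real.rpow_natCast]; ring
    _ = 4 ^ n * n.factorial * ((s ^ 2 / 4) ^ n / n.factorial) := by
          field_simp
          rw [div_pow, mul_div_cancel₀ _ (by positivity)]
    _ ≤ 4 ^ n * n.factorial * Real.exp (s ^ 2 / 4) :=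
          mul_le_mul_of_nonneg_left key (by positivity)
    _ ≤ M * Real.exp (s ^ 2 / 4) :=
          mul_le_mul_of_nonneg_right (le_max_right _ _) (Real.exp_pos _).le

theorem riesz_H2i (d : ℕ) (hd : 1 ≤ d) (γ γ₂ : ℝ) (hγ : 0 < γ) (hγ2 : γ < 2)
    (hγd : γ < d) (hγ₂ : 0 ≤ γ₂) (hγγ₂ : γ - γ₂ < d) :
    ∃ C : ℝ, 0 < C ∧ ∀ r : ℝ, 0 < r →
      (∫ x : EuclideanSpace ℝ (Fin d), ∫ y : EuclideanSpace ℝ (Fin d),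
          ‖x‖ ^ γ₂ * heatKernel d r x * heatKernel d r y * ‖x - y‖ ^ (-γ)) ≤
        C * r ^ ((γ₂ - γ) / 2) := by
  obtain ⟨K, hK, hinner⟩ := inner_bound (d := d) hd hγ hγd
  obtain ⟨M, hM1, hMs⟩ := exists_M hγ₂
  have hM0 : (0:ℝ) < M := lt_of_lt_of_le one_pos hM1
  refine ⟨K * M * 2 ^ ((d:ℝ)/2), by positivity, fun r hr => ?_⟩
  set A : ℝ := K * r ^ (-γ/2) * (M * r ^ (γ₂/2)) * (2*Real.pi*r) ^ (-(d:ℝ)/2) with hA_def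
  have hA0 : 0 < A := by
    have : (0:ℝ) < (2*Real.pi*r) ^ (-(d:ℝ)/2) := Real.rpow_pos_of_pos (by positivity) _
    positivity
  set g : EuclideanSpace ℝ (Fin d) → ℝ :=
    fun x => A * Real.exp (-(1/(4*r)) * ‖x‖ ^ 2) with hg_def
  have hb4 : (0:ℝ) < 1/(4*r) := by positivity
  have hgi : Integrable g := (integrable_gauss hb4).const_mul _
  -- pointwise bound of the inner integral
  have hpt : ∀ x : EuclideanSpace ℝ (Fin d),
      (∫ y : EuclideanSpace ℝ (Fin d),
        ‖x‖ ^ γ₂ * heatKernel d r x * heatKernel d r y * ‖x - y‖ ^ (-γ)) ≤ g x := by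
    intro x
    have h1 : (∫ y : EuclideanSpace ℝ (Fin d),
        ‖x‖ ^ γ₂ * heatKernel d r x * heatKernel d r y * ‖x - y‖ ^ (-γ))
        = (‖x‖ ^ γ₂ * heatKernel d r x) *
          ∫ y : EuclideanSpace ℝ (Fin d), heatKernel d r y * ‖x - y‖ ^ (-γ) := by
      rw [← integral_const_mul]
      congr 1
      funext y
      ring
    rw [h1]
    have h2 : (‖x‖ ^ γ₂ * heatKernel d r x) *
        (∫ y : EuclideanSpace ℝ (Fin d), heatKernel d r y * ‖x - y‖ ^ (-γ))
        ≤ (‖x‖ ^ γ₂ * heatKernel d r x) * (K * r ^ (-γ/2)) :=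
      mul_le_mul_of_nonneg_left (hinner r hr x)
        (mul_nonneg (Real.rpow_nonneg (norm_nonneg _) _) (heatKernel_nonneg hr x))
    refine le_trans h2 ?_
    -- Gaussian moment bound
    set R : ℝ := r ^ ((1:ℝ)/2) with hR_def
    have hR : 0 < R := Real.rpow_pos_of_pos hr _
    set s : ℝ := ‖x‖ / R with hs_def
    have hs0 : 0 ≤ s := div_nonneg (norm_nonneg _) hR.le
    have hxRs : ‖x‖ = R * s := by rw [hs_def, mul_div_cancel₀ _ hR.ne']
    have hs2 : s ^ 2 = ‖x‖ ^ 2 / r := by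
      rw [hs_def, div_pow, hR_def]
      congr 1
      rw [← Real.rpow_natCast (r ^ ((1:ℝ)/2)) 2, ← Real.rpow_mul hr.le]
      norm_num
    have hexp : Real.exp (s ^ 2 / 4) * Real.exp (-‖x‖ ^ 2 / (2*r))
        = Real.exp (-(1/(4*r)) * ‖x‖ ^ 2) := by
      rw [← Real.exp_add]
      congr 1
      rw [hs2]
      field_simp
      ring
    have hnorm : ‖x‖ ^ γ₂ = r ^ (γ₂/2) * s ^ γ₂ := by
      rw [hxRs, Real.mul_rpow hR.le hs0, hR_def, ← Real.rpow_mul hr.le]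
      congr 2
      ring
    have hmom : ‖x‖ ^ γ₂ * Real.exp (-‖x‖ ^ 2 / (2*r))
        ≤ M * r ^ (γ₂/2) * Real.exp (-(1/(4*r)) * ‖x‖ ^ 2) := by
      rw [hnorm, ← hexp]
      have := hMs s hs0
      calc r ^ (γ₂/2) * s ^ γ₂ * Real.exp (-‖x‖ ^ 2 / (2*r))
          ≤ r ^ (γ₂/2) * (M * Real.exp (s ^ 2 / 4)) * Real.exp (-‖x‖ ^ 2 / (2*r)) := by
            have hrp : (0:ℝ) ≤ r ^ (γ₂/2) := (Real.rpow_pos_of_pos hr _).le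
            have hep : (0:ℝ) ≤ Real.exp (-‖x‖ ^ 2 / (2*r)) := (Real.exp_pos _).le
            exact mul_le_mul_of_nonneg_right (mul_le_mul_of_nonneg_left this hrp) hep
        _ = M * r ^ (γ₂/2) * (Real.exp (s ^ 2 / 4) * Real.exp (-‖x‖ ^ 2 / (2*r))) := by ring
    -- put things together
    have hhk : heatKernel d r x = (2*Real.pi*r) ^ (-(d:ℝ)/2) * Real.exp (-‖x‖ ^ 2 / (2*r)) := rfl
    rw [hg_def, hA_def, hhk]
    have hc0 : (0:ℝ) < (2*Real.pi*r) ^ (-(d:ℝ)/2) := Real.rpow_pos_of_pos (by positivity) _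
    have hKr : (0:ℝ) ≤ K * r ^ (-γ/2) := by positivity
    calc ‖x‖ ^ γ₂ * ((2*Real.pi*r) ^ (-(d:ℝ)/2) * Real.exp (-‖x‖ ^ 2 / (2*r))) * (K * r ^ (-γ/2))
        = (K * r ^ (-γ/2)) * (2*Real.pi*r) ^ (-(d:ℝ)/2) *
            (‖x‖ ^ γ₂ * Real.exp (-‖x‖ ^ 2 / (2*r))) := by ring
      _ ≤ (K * r ^ (-γ/2)) * (2*Real.pi*r) ^ (-(d:ℝ)/2) *
            (M * r ^ (γ₂/2) * Real.exp (-(1/(4*r)) * ‖x‖ ^ 2)) := by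
          exact mul_le_mul_of_nonneg_left hmom (by positivity)
      _ = K * r ^ (-γ/2) * (M * r ^ (γ₂/2)) * (2*Real.pi*r) ^ (-(d:ℝ)/2) *
            Real.exp (-(1/(4*r)) * ‖x‖ ^ 2) := by ring
  -- outer integral
  have hfnn : 0 ≤ᵐ[(volume : Measure (EuclideanSpace ℝ (Fin d)))] fun x =>
      ∫ y : EuclideanSpace ℝ (Fin d),
        ‖x‖ ^ γ₂ * heatKernel d r x * heatKernel d r y * ‖x - y‖ ^ (-γ) := by
    refine Filter.Eventually.of_forall fun x => integral_nonneg fun y => ?_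
    exact mul_nonneg (mul_nonneg (mul_nonneg (Real.rpow_nonneg (norm_nonneg _) _)
      (heatKernel_nonneg hr x)) (heatKernel_nonneg hr y))
      (Real.rpow_nonneg (norm_nonneg _) _)
  have hle := integral_mono_of_nonneg hfnn hgi (Filter.Eventually.of_forall hpt)
  refine le_trans hle ?_
  -- compute ∫ g
  rw [hg_def, integral_const_mul, integral_gauss hb4]
  have hpi4 : Real.pi / (1/(4*r)) = 4*Real.pi*r := by field_simp
  rw [hpi4]
  have efin : (2*Real.pi*r) ^ (-(d:ℝ)/2) * (4*Real.pi*r) ^ ((d:ℝ)/2) = 2 ^ ((d:ℝ)/2) := by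
    have h4 : (4*Real.pi*r : ℝ) = 2 * (2*Real.pi*r) := by ring
    rw [h4, show ((2*(2*Real.pi*r):ℝ)) ^ ((d:ℝ)/2)
      = (2:ℝ) ^ ((d:ℝ)/2) * (2*Real.pi*r) ^ ((d:ℝ)/2) from
        Real.mul_rpow (by norm_num) (by positivity)]
    calc (2*Real.pi*r) ^ (-(d:ℝ)/2) * ((2:ℝ) ^ ((d:ℝ)/2) * (2*Real.pi*r) ^ ((d:ℝ)/2))
        = (2:ℝ) ^ ((d:ℝ)/2) * ((2*Real.pi*r) ^ (-(d:ℝ)/2) * (2*Real.pi*r) ^ ((d:ℝ)/2)) := by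
          ring
      _ = 2 ^ ((d:ℝ)/2) := by
          rw [← Real.rpow_add (by positivity), neg_div, neg_add_cancel, Real.rpow_zero, mul_one]
  have er : r ^ (-γ/2) * r ^ (γ₂/2) = r ^ ((γ₂-γ)/2) := by
    rw [← Real.rpow_add hr]
    congr 1
    ring
  apply le_of_eq
  calc K * r ^ (-γ/2) * (M * r ^ (γ₂/2)) * (2*Real.pi*r) ^ (-(d:ℝ)/2) * (4*Real.pi*r) ^ ((d:ℝ)/2)
      = K * M * ((2*Real.pi*r) ^ (-(d:ℝ)/2) * (4*Real.pi*r) ^ ((d:ℝ)/2)) *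
        (r ^ (-γ/2) * r ^ (γ₂/2)) := by ring
    _ = K * M * 2 ^ ((d:ℝ)/2) * r ^ ((γ₂-γ)/2) := by rw [efin, er]
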